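/- Let Δ ≥ 2 and let G be a connected infinite Δ-regular graph that contains a subgraph isomorphic to RT_Δ. Then the epidemic region of G equals that of the infinite Δ-regular tree: Ω_G = Ω_{T_Δ}. -/

import Mathlib

namespace Contagion

open scoped BigOperators

/-- The three strategies in the contagion game. -/
inductive Strat
  | A | B | AB
deriving DecidableEq

/-- Pairwise payoff to a player using the first strategy against a neighbor
using the second strategy, in the contagion game with parameters `q, r`. -/
noncomputable def pairPayoff (q r : ℝ) : Strat → Strat → ℝ
  | .A, .A => 1 - q
  | .A, .B => 0
  | .A, .AB => 1 - q
  | .B, .A => 0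
  | .B, .B => q
  | .B, .AB => q
  | .AB, .A => 1 - q - r
  | .AB, .B => q - r
  | .AB, .AB => max q (1 - q) - r

variable {V : Type*}

/-- Total payoff to vertex `v` for playing strategy `s` against profile `σ`. -/
noncomputable def totalPayoff (G : SimpleGraph V) (q r : ℝ) (σ : V → Strat)
    (v : V) (s : Strat) : ℝ :=
  ∑ᶠ u ∈ G.neighborSet v, pairPayoff q r s (σ u)

/-- `s` is a best response of vertex `v` to the profile `σ`. -/
def IsBestResponse (G : SimpleGraph V) (q r : ℝ) (σ : V → Strat) (v : V) (s : Strat) : Prop :=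
  ∀ s' : Strat, totalPayoff G q r σ v s' ≤ totalPayoff G q r σ v s

/-- Strategy `A` becomes epidemic in the contagion game `(G, q, r)`:
there are a finite initial set `S₀` (playing `A`, everybody else playing `B`) and a
sequence `α` of vertices in which every vertex appears at least once, such that updating
at step `n` the vertex `α n` to a best response makes every vertex eventually adopt `A`. -/
def Epidemic (G : SimpleGraph V) (q r : ℝ) : Prop :=
  ∃ (S₀ : Set V) (α : ℕ → V) (σ : ℕ → V → Strat),
    S₀.Finite ∧
    Function.Surjective α ∧
    (∀ v ∈ S₀, σ 0 v = Strat.A) ∧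
    (∀ v ∉ S₀, σ 0 v = Strat.B) ∧
    (∀ n, IsBestResponse G q r (σ n) (α n) (σ (n + 1) (α n))) ∧
    (∀ n v, v ≠ α n → σ (n + 1) v = σ n v) ∧
    (∀ v, ∃ n, σ n v = Strat.A)

/-- The epidemic region `Ω_G ⊆ ℝ²` of `G`. -/
def epidemicRegion (G : SimpleGraph V) : Set (ℝ × ℝ) :=
  {p | 0 < p.1 ∧ p.1 < 1 ∧ 0 < p.2 ∧ Epidemic G p.1 p.2}

/-- `G` is `Δ`-regular: every vertex has exactly `Δ` neighbors. -/
def IsRegular (G : SimpleGraph V) (Δ : ℕ) : Prop :=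
  ∀ v, (G.neighborSet v).ncard = Δ

/-- The number of neighbors of `v` lying in the set `S`. -/
noncomputable def degIn (G : SimpleGraph V) (v : V) (S : Set V) : ℕ :=
  (G.neighborSet v ∩ S).ncard

/-- `RT Δ`: the infinite rooted tree in which the root (the empty list) has `Δ - 1`
children and every other vertex also has `Δ - 1` children (hence degree `Δ`). -/
def RT (Δ : ℕ) : SimpleGraph (List (Fin (Δ - 1))) :=
  SimpleGraph.fromRel (fun l l' => ∃ a : Fin (Δ - 1), l' = a :: l)

/-- `G` contains a subgraph isomorphic to `RT Δ`. -/
def HasRTCopy (Δ : ℕ) (G : SimpleGraph V) : Prop :=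
  ∃ f : List (Fin (Δ - 1)) → V,
    Function.Injective f ∧ ∀ x y, (RT Δ).Adj x y → G.Adj (f x) (f y)

/-- The thick half line `HL_Δ` (for even `Δ`), columns indexed by `ℕ` starting with the
first column `0`; `(k, i)` and `(l, j)` are adjacent exactly when `|k - l| = 1`. -/
def HL (Δ : ℕ) : SimpleGraph (ℕ × Fin (Δ / 2)) :=
  SimpleGraph.fromRel (fun x y => y.1 = x.1 + 1)

/-- The epidemic region of the infinite `Δ`-regular tree:
`{(q,r) : q,r > 0, r ≥ ((Δ-1)/Δ)q, q ≤ 1/Δ} ∪ {(q,r) : q,r > 0, 2q + Δr ≤ 1}`. -/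
def treeRegion (Δ : ℕ) : Set (ℝ × ℝ) :=
  {p | 0 < p.1 ∧ 0 < p.2 ∧ ((Δ : ℝ) - 1) / Δ * p.1 ≤ p.2 ∧ p.1 ≤ 1 / Δ} ∪
  {p | 0 < p.1 ∧ 0 < p.2 ∧ 2 * p.1 + Δ * p.2 ≤ 1}

/-- The epidemic region of the thick line `L_Δ`:
`{(q,r) : 0 < q ≤ 1/2, r ≥ q/2} ∪ {(q,r) : q,r > 0, r ≤ q/2, 2q + 2r ≤ 1}`. -/
def thickLineRegion : Set (ℝ × ℝ) :=
  {p | 0 < p.1 ∧ p.1 ≤ 1 / 2 ∧ p.1 / 2 ≤ p.2} ∪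
  {p | 0 < p.1 ∧ 0 < p.2 ∧ p.2 ≤ p.1 / 2 ∧ 2 * p.1 + 2 * p.2 ≤ 1}

/-- `(SAB, SB)` is a blocking structure for the contagion game `(G, q, r)`
on a `Δ`-regular graph `G`. -/
def IsBlockingStructure (G : SimpleGraph V) (Δ : ℕ) (q r : ℝ) (SAB SB : Set V) : Prop :=
  Disjoint SAB SB ∧ (SAB.Nonempty ∨ SB.Nonempty) ∧
  (∀ v ∈ SAB, r / q * Δ < (degIn G v SB : ℝ)) ∧
  ∀ v ∈ SB,
    (1 - q - r) * Δ < (1 - q) * (degIn G v SB : ℝ) + min q (1 - q) * (degIn G v SAB : ℝ) ∧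
    (1 - q) * Δ < (degIn G v SB : ℝ) + q * (degIn G v SAB : ℝ)

/-- The two strategies of the `A`-`B` coordination game. -/
inductive CStrat
  | A | B
deriving DecidableEq

/-- Pairwise payoff in the `A`-`B` coordination game `(G, q)`. -/
noncomputable def cPairPayoff (q : ℝ) : CStrat → CStrat → ℝ
  | .A, .A => 1 - q
  | .A, .B => 0
  | .B, .A => 0
  | .B, .B => q

/-- Total payoff to `v` for playing `s` against profile `σ` in the coordination game. -/
noncomputable def cTotalPayoff (G : SimpleGraph V) (q : ℝ) (σ : V → CStrat)
    (v : V) (s : CStrat) : ℝ :=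
  ∑ᶠ u ∈ G.neighborSet v, cPairPayoff q s (σ u)

/-- `s` is a best response of `v` to `σ` in the coordination game. -/
def CIsBestResponse (G : SimpleGraph V) (q : ℝ) (σ : V → CStrat) (v : V) (s : CStrat) : Prop :=
  ∀ s' : CStrat, cTotalPayoff G q σ v s' ≤ cTotalPayoff G q σ v s

/-- Strategy `A` becomes epidemic in the coordination game `(G, q)` starting from the
initial set `S₀`. -/
def CoordEpidemicFrom (G : SimpleGraph V) (q : ℝ) (S₀ : Set V) : Prop :=
  ∃ (α : ℕ → V) (σ : ℕ → V → CStrat),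
    Function.Surjective α ∧
    (∀ v ∈ S₀, σ 0 v = CStrat.A) ∧
    (∀ v ∉ S₀, σ 0 v = CStrat.B) ∧
    (∀ n, CIsBestResponse G q (σ n) (α n) (σ (n + 1) (α n))) ∧
    (∀ n v, v ≠ α n → σ (n + 1) v = σ n v) ∧
    (∀ v, ∃ n, σ n v = CStrat.A)

/-- Strategy `A` becomes epidemic in the coordination game `(G, q)`. -/
def CoordEpidemic (G : SimpleGraph V) (q : ℝ) : Prop :=
  ∃ S₀ : Set V, S₀.Finite ∧ CoordEpidemicFrom G q S₀


/-!
On a connected `Δ`-regular graph, two adjacent initial `A`-players make `A` epidemic inside the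
tree region under best-response dynamics that break ties towards `A`, then `AB`: if `q Δ ≤ 1`
and `q (Δ - 1) ≤ r Δ`, nobody ever plays `AB` and `A` spreads along edges; if `2 q + Δ r ≤ 1`,
"not `B`" spreads along edges, after which every vertex best-responds with `A`. Outside the tree
region, a copy of `RT_Δ` contains a subtree disjoint from the finite seed whose root never plays
`A` and whose other vertices play `B` forever, because a vertex whose `Δ - 1` children play `B`
has a strict preference determined by the strategy of its parent alone. The infinite
`Δ`-regular tree contains such a copy, so both epidemic regions equal `treeRegion Δ`.
-/

open Filter

instance : Fintype Strat := ⟨{.A, .B, .AB}, fun s => by cases s <;> decide⟩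

lemma Strat.sum_univ {M : Type*} [AddCommMonoid M] (f : Strat → M) :
    ∑ t, f t = f .A + f .B + f .AB := by
  simp [Finset.univ, Fintype.elems, add_assoc]

/-! ### Regular graphs and trees -/

theorem _root_.SimpleGraph.Preconnected.forall_of_adj {G : SimpleGraph V} (hG : G.Preconnected)
    {P : V → Prop} (hP : ∀ u v, G.Adj u v → P u → P v) {z : V} (hz : P z) (v : V) : P v := by
  obtain ⟨p⟩ := hG z v
  induction p with
  | nil => exact hz
  | cons h _ ih => exact ih (hP _ _ h hz)

theorem _root_.SimpleGraph.Preconnected.countable {G : SimpleGraph V} (hG : G.Preconnected)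
    (h : ∀ v, (G.neighborSet v).Countable) : Countable V := by
  rcases isEmpty_or_nonempty V with hV | ⟨⟨z⟩⟩
  · infer_instance
  have hlen : ∀ n, {v | ∃ p : G.Walk v z, p.length = n}.Countable := by
    intro n
    induction n with
    | zero =>
      refine (Set.countable_singleton z).mono ?_
      rintro v ⟨p, hp⟩
      exact (SimpleGraph.Walk.eq_of_length_eq_zero hp : v = z)
    | succ n ih =>
      refine (ih.biUnion fun u _ => h u).mono ?_
      rintro v ⟨_ | ⟨hvu, p⟩, hp⟩
      · simp at hp
      · exact Set.mem_biUnion ⟨p, by simpa using hp⟩ hvu.symm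
  have hcover : ⋃ n, {v | ∃ p : G.Walk v z, p.length = n} = Set.univ :=
    Set.eq_univ_of_forall fun v => Set.mem_iUnion.2 ⟨_, (hG v z).some, rfl⟩
  exact Set.countable_univ_iff.1 (hcover ▸ Set.countable_iUnion hlen)

section Regular

variable {G : SimpleGraph V} {Δ : ℕ}

lemma IsRegular.finite_neighborSet (hG : IsRegular G Δ) (hΔ : Δ ≠ 0) (v : V) :
    (G.neighborSet v).Finite :=
  Set.finite_of_ncard_ne_zero (by rw [hG v]; exact hΔ)

lemma IsRegular.nonempty_neighborSet (hG : IsRegular G Δ) (hΔ : Δ ≠ 0) (v : V) :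
    (G.neighborSet v).Nonempty :=
  Set.nonempty_of_ncard_ne_zero (by rw [hG v]; exact hΔ)

lemma IsRegular.exists_adj_and_schedule (hG : IsRegular G Δ) (hΔ : Δ ≠ 0) (hconn : G.Connected) :
    ∃ z z' : V, G.Adj z z' ∧ ∃ α : ℕ → V, ∀ v, ∃ᶠ n in atTop, α n = v := by
  obtain ⟨z⟩ := hconn.nonempty
  obtain ⟨z', hzz'⟩ := hG.nonempty_neighborSet hΔ z
  have : Countable V :=
    hconn.preconnected.countable fun v => (hG.finite_neighborSet hΔ v).countable
  have : Nonempty V := ⟨z⟩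
  obtain ⟨e, he⟩ := exists_surjective_nat V
  refine ⟨z, z', hzz', fun n => e n.unpair.1, fun v => frequently_atTop.2 fun N => ?_⟩
  obtain ⟨k, rfl⟩ := he v
  exact ⟨Nat.pair k N, Nat.right_le_pair k N, by simp only [Nat.unpair_pair]⟩

lemma IsRegular.exists_injective_children (hG : IsRegular G Δ) (hΔ : Δ ≠ 0) {v p : V}
    (hvp : G.Adj v p) :
    ∃ c : Fin (Δ - 1) → V, Function.Injective c ∧ ∀ a, G.Adj v (c a) ∧ c a ≠ p := by
  have : Finite (G.neighborSet v \ {p} : Set V) := (hG.finite_neighborSet hΔ v).sdiff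
  have hcard : Nat.card (G.neighborSet v \ {p} : Set V) = Δ - 1 := by
    rw [Nat.card_coe_set_eq, Set.ncard_sdiff_singleton_of_mem (s := G.neighborSet v) hvp, hG v]
  let e := (Finite.equivFin _).trans (finCongr hcard)
  exact ⟨fun a => e.symm a, Subtype.val_injective.comp e.symm.injective,
    fun a => ⟨(e.symm a).2.1, (e.symm a).2.2⟩⟩

end Regular

/-- The vertex reached from the edge `z z'` along the address `l`, paired with its parent, when
`c v p` enumerates the neighbours of `v` other than `p`. -/
def descend {ι : Type*} (c : V → V → ι → V) (z z' : V) : List ι → V × V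
  | [] => (z, z')
  | a :: l => (c (descend c z z' l).1 (descend c z z' l).2 a, (descend c z z' l).1)

section Descend

variable {ι : Type*} {G : SimpleGraph V} {c : V → V → ι → V} {z z' : V}
  (hc : ∀ v p, G.Adj v p → ∀ a, G.Adj v (c v p a) ∧ c v p a ≠ p) (hzz' : G.Adj z z')
include hc hzz'

lemma adj_descend (l : List ι) : G.Adj (descend c z z' l).1 (descend c z z' l).2 := by
  induction l with
  | nil => exact hzz'
  | cons a l ih => exact (hc _ _ ih a).1.symm

lemma exists_isPath_descend (hG : G.IsAcyclic) (l : List ι) :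
    ∃ p : G.Walk (descend c z z' l).1 z',
      p.IsPath ∧ p.length = l.length + 1 ∧ p.snd = (descend c z z' l).2 := by
  induction l with
  | nil =>
    have hp : (SimpleGraph.Walk.cons hzz' .nil).IsPath := by simp [hzz'.ne]
    exact ⟨_, hp, rfl, rfl⟩
  | cons a l ih =>
    obtain ⟨p, hp, hlen, hsnd⟩ := ih
    have hchild := hc _ _ (adj_descend hc hzz' l) a
    refine ⟨.cons hchild.1.symm p, hp.cons fun hmem => ?_, by simp [descend, hlen],
      by simp [descend]⟩
    exact hchild.2 ((hG.eq_snd_of_adj_start hp hchild.1 hmem).trans hsnd)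

lemma length_eq_of_fst_descend_eq (hG : G.IsAcyclic) {l l' : List ι}
    (h : (descend c z z' l).1 = (descend c z z' l').1) :
    l.length = l'.length ∧ (descend c z z' l).2 = (descend c z z' l').2 := by
  obtain ⟨p, hp, hlen, hsnd⟩ := exists_isPath_descend hc hzz' hG l
  obtain ⟨p', hp', hlen', hsnd'⟩ := exists_isPath_descend hc hzz' hG l'
  have hpp : p = p'.copy h.symm rfl := congrArg Subtype.val <|
    (hG.subsingleton_path _ _).elim ⟨p, hp⟩ ⟨_, (SimpleGraph.Walk.isPath_copy p' h.symm rfl).2 hp'⟩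
  refine ⟨?_, ?_⟩
  · have := congrArg SimpleGraph.Walk.length hpp
    rw [SimpleGraph.Walk.length_copy] at this
    omega
  · rw [← hsnd, ← hsnd', hpp, SimpleGraph.Walk.snd, SimpleGraph.Walk.getVert_copy]

lemma injective_descend (hG : G.IsAcyclic)
    (hcinj : ∀ v p, G.Adj v p → Function.Injective (c v p)) :
    Function.Injective fun l => (descend c z z' l).1 := by
  intro l l' h
  induction l generalizing l' with
  | nil =>
    cases l' with
    | nil => rfl
    | cons => simpa using (length_eq_of_fst_descend_eq hc hzz' hG h).1
  | cons a l ih =>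
    cases l' with
    | nil => simpa using (length_eq_of_fst_descend_eq hc hzz' hG h).1
    | cons a' l' =>
      obtain rfl := ih (length_eq_of_fst_descend_eq hc hzz' hG h).2
      obtain rfl := hcinj _ _ (adj_descend hc hzz' l) h
      rfl

end Descend

lemma hasRTCopy_of_isAcyclic {G : SimpleGraph V} {Δ : ℕ} [Nonempty V] (hG : IsRegular G Δ)
    (hΔ : Δ ≠ 0) (hacyc : G.IsAcyclic) : HasRTCopy Δ G := by
  obtain ⟨z⟩ := ‹Nonempty V›
  obtain ⟨z', hzz'⟩ := hG.nonempty_neighborSet hΔ z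
  choose! c hcinj hc using fun v p (h : G.Adj v p) => hG.exists_injective_children hΔ h
  refine ⟨fun l => (descend c z z' l).1, injective_descend hc hzz' hacyc hcinj, ?_⟩
  rintro x y ⟨-, ⟨a, rfl⟩ | ⟨a, rfl⟩⟩
  · exact (hc _ _ (adj_descend hc hzz' x) a).1
  · exact (hc _ _ (adj_descend hc hzz' y) a).1.symm

lemma RT_adj_cons (Δ : ℕ) (a : Fin (Δ - 1)) (l : List (Fin (Δ - 1))) : (RT Δ).Adj l (a :: l) :=
  (SimpleGraph.fromRel_adj _ _ _).2
    ⟨fun h => by simpa using congrArg List.length h, Or.inl ⟨a, rfl⟩⟩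

lemma injective_cons {ι : Type*} {f : List ι → V} (hf : Function.Injective f) (l : List ι) :
    Function.Injective fun a => f (a :: l) :=
  fun _ _ h => (List.cons.inj (hf h)).1

lemma notMem_range_cons_cons {ι : Type*} {f : List ι → V} (hf : Function.Injective f) {b : ι}
    {t : List ι} : f t ∉ Set.range fun a => f (a :: b :: t) := by
  rintro ⟨a, ha⟩
  have := congrArg List.length (hf ha)
  simp only [List.length_cons] at this
  omega

lemma neighborSet_copy {G : SimpleGraph V} {Δ : ℕ} {f : List (Fin (Δ - 1)) → V}
    (hG : IsRegular G Δ) (hf : Function.Injective f)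
    (hfG : ∀ x y, (RT Δ).Adj x y → G.Adj (f x) (f y)) (b : Fin (Δ - 1)) (t : List (Fin (Δ - 1))) :
    G.neighborSet (f (b :: t)) = insert (f t) (Set.range fun a => f (a :: b :: t)) := by
  have hb := b.pos
  have hsub : insert (f t) (Set.range fun a => f (a :: b :: t)) ⊆ G.neighborSet (f (b :: t)) := by
    rintro _ (rfl | ⟨a, rfl⟩)
    · exact (hfG _ _ (RT_adj_cons Δ b t)).symm
    · exact hfG _ _ (RT_adj_cons Δ a (b :: t))
  have hcard : (insert (f t) (Set.range fun a => f (a :: b :: t))).ncard = Δ := by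
    rw [Set.ncard_insert_of_notMem (notMem_range_cons_cons hf) (Set.finite_range _),
      ← Nat.card_coe_set_eq, Nat.card_range_of_injective (injective_cons hf _),
      Nat.card_eq_fintype_card, Fintype.card_fin]
    omega
  exact (Set.eq_of_subset_of_ncard_le hsub (by rw [hcard, hG])
    (hG.finite_neighborSet (by omega) _)).symm

/-! ### Payoffs on regular graphs -/

section Counting

variable {G : SimpleGraph V} {Δ : ℕ} {q r : ℝ} {σ : V → Strat} {v : V}

lemma totalPayoff_eq_sum_degIn (hfin : (G.neighborSet v).Finite) (s : Strat) :
    totalPayoff G q r σ v s = ∑ t, (degIn G v (σ ⁻¹' {t}) : ℝ) * pairPayoff q r s t := by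
  classical
  rw [totalPayoff, ← hfin.coe_toFinset, finsum_mem_coe_finset, ← Finset.sum_fiberwise _ σ]
  refine Finset.sum_congr rfl fun t _ => ?_
  rw [Finset.sum_congr rfl fun u hu => by rw [(Finset.mem_filter.1 hu).2], Finset.sum_const,
    nsmul_eq_mul, degIn, ← Set.ncard_coe_finset]
  congr
  ext u
  simp

lemma sum_degIn (hfin : (G.neighborSet v).Finite) :
    ∑ t, degIn G v (σ ⁻¹' {t}) = (G.neighborSet v).ncard := by
  classical
  rw [← hfin.coe_toFinset, Set.ncard_coe_finset, Finset.card_eq_sum_card_fiberwise (f := σ)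
    (t := Finset.univ) (fun _ _ => Finset.mem_univ _)]
  refine Finset.sum_congr rfl fun t _ => ?_
  rw [degIn, ← Set.ncard_coe_finset]
  congr
  ext u
  simp

lemma degIn_preimage_eq_zero {t : Strat} (h : ∀ u, G.Adj v u → σ u ≠ t) :
    degIn G v (σ ⁻¹' {t}) = 0 := by
  rw [degIn, Set.eq_empty_of_forall_notMem (s := G.neighborSet v ∩ σ ⁻¹' {t})
    fun u hu => h u hu.1 hu.2, Set.ncard_empty]

lemma degIn_preimage_ne_zero {u : V} {t : Strat} (hfin : (G.neighborSet v).Finite)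
    (hu : G.Adj v u) (ht : σ u = t) : degIn G v (σ ⁻¹' {t}) ≠ 0 :=
  Set.ncard_ne_zero_of_mem ⟨hu, ht⟩ (hfin.inter_of_left _)

lemma totalPayoff_eq_degIn (hfin : (G.neighborSet v).Finite) (s : Strat) :
    totalPayoff G q r σ v s =
      degIn G v (σ ⁻¹' {.A}) * pairPayoff q r s .A +
      degIn G v (σ ⁻¹' {.B}) * pairPayoff q r s .B +
      degIn G v (σ ⁻¹' {.AB}) * pairPayoff q r s .AB := by
  rw [totalPayoff_eq_sum_degIn hfin, Strat.sum_univ]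

lemma IsRegular.degIn_add_degIn_add_degIn (hG : IsRegular G Δ) (hΔ : Δ ≠ 0) :
    (degIn G v (σ ⁻¹' {.A}) : ℝ) + degIn G v (σ ⁻¹' {.B}) + degIn G v (σ ⁻¹' {.AB}) = Δ := by
  have h := sum_degIn (σ := σ) (hG.finite_neighborSet hΔ v)
  rw [Strat.sum_univ, hG v] at h
  exact_mod_cast h

lemma isBestResponse_A_of_regionI (hG : IsRegular G Δ) (hΔ : Δ ≠ 0) (hq : 0 < q)
    (h₁ : q * Δ ≤ 1) (h₂ : q * (Δ - 1) ≤ r * Δ)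
    (hA : degIn G v (σ ⁻¹' {.A}) ≠ 0) (hAB : degIn G v (σ ⁻¹' {.AB}) = 0) :
    IsBestResponse G q r σ v .A := by
  have hsum := hG.degIn_add_degIn_add_degIn (v := v) (σ := σ) hΔ
  have ha : (1 : ℝ) ≤ degIn G v (σ ⁻¹' {.A}) := by exact_mod_cast Nat.one_le_iff_ne_zero.2 hA
  intro s
  simp only [totalPayoff_eq_degIn (hG.finite_neighborSet hΔ v), hAB, Nat.cast_zero] at hsum ⊢
  generalize (degIn G v (σ ⁻¹' {.A}) : ℝ) = a, (degIn G v (σ ⁻¹' {.B}) : ℝ) = b at *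
  rw [← hsum] at h₁ h₂
  have hqa : q * 1 ≤ q * a := mul_le_mul_of_nonneg_left ha hq.le
  cases s <;> simp only [pairPayoff] <;> nlinarith

lemma not_isBestResponse_AB_of_forall_B (hG : IsRegular G Δ) (hΔ : Δ ≠ 0) (hr : 0 < r)
    (hA : degIn G v (σ ⁻¹' {.A}) = 0) (hAB : degIn G v (σ ⁻¹' {.AB}) = 0) :
    ¬ IsBestResponse G q r σ v .AB := by
  have hsum := hG.degIn_add_degIn_add_degIn (v := v) (σ := σ) hΔ
  have hΔpos : (0 : ℝ) < Δ := by exact_mod_cast Nat.pos_of_ne_zero hΔ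
  intro h
  have h := h .B
  simp only [totalPayoff_eq_degIn (hG.finite_neighborSet hΔ v), hA, hAB, Nat.cast_zero,
    pairPayoff] at hsum h
  nlinarith

lemma totalPayoff_B_le_AB_of_regionII (hG : IsRegular G Δ) (hΔ : Δ ≠ 0) (hq : 0 < q)
    (hr : 0 < r) (h : 2 * q + r * Δ ≤ 1)
    (hAAB : 1 ≤ degIn G v (σ ⁻¹' {.A}) + degIn G v (σ ⁻¹' {.AB})) :
    totalPayoff G q r σ v .B ≤ totalPayoff G q r σ v .AB := by
  have hsum := hG.degIn_add_degIn_add_degIn (v := v) (σ := σ) hΔ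
  have h1 : (1 : ℝ) ≤ degIn G v (σ ⁻¹' {.A}) + degIn G v (σ ⁻¹' {.AB}) := by exact_mod_cast hAAB
  have ha := (degIn G v (σ ⁻¹' {.A})).cast_nonneg (α := ℝ)
  have hmax : max q (1 - q) = 1 - q := max_eq_right (by nlinarith)
  simp only [totalPayoff_eq_degIn (hG.finite_neighborSet hΔ v), pairPayoff, hmax]
  generalize (degIn G v (σ ⁻¹' {.A}) : ℝ) = a, (degIn G v (σ ⁻¹' {.B}) : ℝ) = b,
    (degIn G v (σ ⁻¹' {.AB}) : ℝ) = c at *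
  have h2 : 0 ≤ (1 - 2 * q) * (a + c - 1) := mul_nonneg (by nlinarith) (by linarith)
  nlinarith [mul_nonneg hq.le ha]

lemma isBestResponse_A_of_regionII (hG : IsRegular G Δ) (hΔ : Δ ≠ 0) (hr : 0 < r)
    (h : 2 * q + r * Δ ≤ 1) (hB : degIn G v (σ ⁻¹' {.B}) = 0) :
    IsBestResponse G q r σ v .A := by
  have hsum := hG.degIn_add_degIn_add_degIn (v := v) (σ := σ) hΔ
  have ha := (degIn G v (σ ⁻¹' {.A})).cast_nonneg (α := ℝ)
  have hc := (degIn G v (σ ⁻¹' {.AB})).cast_nonneg (α := ℝ)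
  have hmax : max q (1 - q) = 1 - q := max_eq_right (by nlinarith)
  intro s
  simp only [totalPayoff_eq_degIn (hG.finite_neighborSet hΔ v), hB, Nat.cast_zero] at hsum ⊢
  generalize (degIn G v (σ ⁻¹' {.A}) : ℝ) = a, (degIn G v (σ ⁻¹' {.AB}) : ℝ) = c at *
  have hq2 : 0 ≤ 1 - 2 * q := by nlinarith
  cases s <;> simp only [pairPayoff, hmax] <;>
    nlinarith [mul_nonneg hc hq2, mul_nonneg ha hq2, mul_nonneg hr.le (add_nonneg ha hc)]

end Counting

/-- The payoff of `s` at a vertex of a copy of `RT Δ` whose `Δ - 1` children play `B` and whose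
parent plays `x`. -/
noncomputable def branchPayoff (Δ : ℕ) (q r : ℝ) (s x : Strat) : ℝ :=
  pairPayoff q r s x + ((Δ : ℝ) - 1) * pairPayoff q r s .B

section BranchPayoff

variable {G : SimpleGraph V} {Δ : ℕ} {q r : ℝ} {f : List (Fin (Δ - 1)) → V}

lemma totalPayoff_copy (hG : IsRegular G Δ) (hf : Function.Injective f)
    (hfG : ∀ x y, (RT Δ).Adj x y → G.Adj (f x) (f y)) {σ : V → Strat} {b : Fin (Δ - 1)}
    {t : List (Fin (Δ - 1))} (hch : ∀ a, σ (f (a :: b :: t)) = .B) (s : Strat) :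
    totalPayoff G q r σ (f (b :: t)) s = branchPayoff Δ q r s (σ (f t)) := by
  rw [totalPayoff, neighborSet_copy hG hf hfG, finsum_mem_insert _ (notMem_range_cons_cons hf)
    (Set.finite_range _), finsum_mem_range (injective_cons hf _), finsum_eq_sum_of_fintype]
  simp only [hch, Finset.sum_const, Finset.card_univ, Fintype.card_fin, nsmul_eq_mul, branchPayoff]
  rw [Nat.cast_sub (by have := b.pos; omega), Nat.cast_one]

lemma isBestResponse_copy_iff (hG : IsRegular G Δ) (hf : Function.Injective f)
    (hfG : ∀ x y, (RT Δ).Adj x y → G.Adj (f x) (f y)) {σ : V → Strat} {b : Fin (Δ - 1)}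
    {t : List (Fin (Δ - 1))} (hch : ∀ a, σ (f (a :: b :: t)) = .B) {s : Strat} :
    IsBestResponse G q r σ (f (b :: t)) s ↔
      ∀ s', branchPayoff Δ q r s' (σ (f t)) ≤ branchPayoff Δ q r s (σ (f t)) := by
  simp only [IsBestResponse, totalPayoff_copy hG hf hfG hch]

lemma branchPayoff_lt_B_of_ne_A (hΔ : 1 ≤ Δ) (hr : 0 < r) (h₁ : 1 < 2 * q + r * Δ)
    (h₂ : 1 < q * (Δ + 1)) {x s : Strat} (hx : x ≠ .A) (hs : s ≠ .B) :
    branchPayoff Δ q r s x < branchPayoff Δ q r .B x := by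
  have hΔ' : (1 : ℝ) ≤ Δ := by exact_mod_cast hΔ
  have hmax : max q (1 - q) < q + r * Δ := max_lt (by nlinarith) (by linarith)
  cases x <;> cases s <;> simp only [branchPayoff, pairPayoff] <;>
    first | exact absurd rfl hx | exact absurd rfl hs | nlinarith

lemma branchPayoff_A_lt_AB (hq : 0 < q) (h : r * Δ < q * (Δ - 1)) (x : Strat) :
    branchPayoff Δ q r .A x < branchPayoff Δ q r .AB x := by
  have hmax : 1 - q ≤ max q (1 - q) := le_max_right _ _
  cases x <;> simp only [branchPayoff, pairPayoff] <;> nlinarith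

lemma branchPayoff_lt_B (hq : 0 < q) (hr : 0 < r) (h₁ : 1 < q * Δ) (h₂ : 1 < q + r * Δ)
    {s : Strat} (hs : s ≠ .B) (x : Strat) :
    branchPayoff Δ q r s x < branchPayoff Δ q r .B x := by
  have hΔ : (0 : ℝ) < Δ := by
    by_contra h
    nlinarith
  have hmax : max q (1 - q) < q + r * Δ := max_lt (by nlinarith) (by linarith)
  cases x <;> cases s <;> simp only [branchPayoff, pairPayoff] <;>
    first | exact absurd rfl hs | nlinarith

end BranchPayoff

/-! ### Best-response dynamics -/

lemma forall_of_invariant {S : Type*} {σ : ℕ → V → S} {α : ℕ → V}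
    (hne : ∀ n v, v ≠ α n → σ (n + 1) v = σ n v) (Q : V → S → Prop) (h₀ : ∀ v, Q v (σ 0 v))
    (hstep : ∀ n, (∀ v, Q v (σ n v)) → Q (α n) (σ (n + 1) (α n))) (n : ℕ) (v : V) :
    Q v (σ n v) := by
  induction n generalizing v with
  | zero => exact h₀ v
  | succ n ih =>
    by_cases hv : v = α n
    · subst hv
      exact hstep n ih
    · rw [hne n v hv]
      exact ih v

section Spreading

variable {S : Type*} {G : SimpleGraph V} {σ : ℕ → V → S} {α : ℕ → V} {P : S → Prop}
  (hne : ∀ n v, v ≠ α n → σ (n + 1) v = σ n v) (hα : ∀ v, ∃ᶠ n in atTop, α n = v)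
  (hspread : ∀ n u, G.Adj (α n) u → P (σ n u) → P (σ (n + 1) (α n)))
include hne hα hspread

lemma eventually_of_adj {u v : V} (huv : G.Adj v u) (hu : ∀ᶠ n in atTop, P (σ n u)) :
    ∀ᶠ n in atTop, P (σ n v) := by
  obtain ⟨N, hN⟩ := eventually_atTop.1 hu
  obtain ⟨n₀, hn₀, rfl⟩ := frequently_atTop.1 (hα v) N
  refine eventually_atTop.2 ⟨n₀ + 1, fun m hm => ?_⟩
  induction m, hm using Nat.le_induction with
  | base => exact hspread n₀ u huv (hN n₀ hn₀)
  | succ m hm ih =>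
    by_cases hv : α n₀ = α m
    · rw [hv] at huv ⊢
      exact hspread m u huv (hN m (by omega))
    · rw [hne m _ hv]
      exact ih

lemma eventually_of_seed (hG : G.Preconnected) {z z' : V} (hzz' : G.Adj z z')
    (hz : P (σ 0 z)) (hz' : P (σ 0 z')) (v : V) : ∀ᶠ n in atTop, P (σ n v) := by
  have hseed n : P (σ n z) := by
    refine forall_of_invariant hne (fun w s => w = z ∨ w = z' → P s)
      (by rintro w (rfl | rfl) <;> assumption) (fun n h => ?_) n z (Or.inl rfl)
    rintro (hz | hz')
    · exact hspread n z' (hz ▸ hzz') (h z' (Or.inr rfl))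
    · exact hspread n z (hz' ▸ hzz'.symm) (h z (Or.inl rfl))
  exact hG.forall_of_adj (P := fun w => ∀ᶠ n in atTop, P (σ n w))
    (fun u w huw hu => eventually_of_adj hne hα hspread huw.symm hu)
    (Eventually.of_forall hseed) v

end Spreading

section Dynamics

variable {G : SimpleGraph V} {Δ : ℕ} {q r : ℝ} {σ : V → Strat} {v : V}

lemma exists_isBestResponse (G : SimpleGraph V) (q r : ℝ) (σ : V → Strat) (v : V) :
    ∃ s, IsBestResponse G q r σ v s :=
  have : Nonempty Strat := ⟨.A⟩
  Finite.exists_max _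

open Classical in
noncomputable def preferredResponse (G : SimpleGraph V) (q r : ℝ) (σ : V → Strat) (v : V) :
    Strat :=
  if IsBestResponse G q r σ v .A then .A else if IsBestResponse G q r σ v .AB then .AB else .B

lemma isBestResponse_preferredResponse :
    IsBestResponse G q r σ v (preferredResponse G q r σ v) := by
  unfold preferredResponse
  split_ifs with hA hAB
  · exact hA
  · exact hAB
  · obtain ⟨s, hs⟩ := exists_isBestResponse G q r σ v
    cases s
    exacts [absurd hs hA, hs, absurd hs hAB]

lemma preferredResponse_eq_A (h : IsBestResponse G q r σ v .A) :
    preferredResponse G q r σ v = .A :=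
  if_pos h

lemma preferredResponse_ne_AB (h : IsBestResponse G q r σ v .AB → IsBestResponse G q r σ v .A) :
    preferredResponse G q r σ v ≠ .AB := by
  unfold preferredResponse
  split_ifs <;> simp_all

lemma preferredResponse_ne_B (h : totalPayoff G q r σ v .B ≤ totalPayoff G q r σ v .AB) :
    preferredResponse G q r σ v ≠ .B := by
  intro hB
  have hbest := hB ▸ isBestResponse_preferredResponse (G := G) (q := q) (r := r) (σ := σ) (v := v)
  unfold preferredResponse at hB
  split_ifs at hB with hA hAB
  exact hAB fun s => (hbest s).trans h

open Classical in
noncomputable def responseRun (G : SimpleGraph V) (q r : ℝ) (S₀ : Set V) (α : ℕ → V) :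
    ℕ → V → Strat
  | 0 => fun v => if v ∈ S₀ then .A else .B
  | n + 1 => Function.update (responseRun G q r S₀ α n) (α n)
      (preferredResponse G q r (responseRun G q r S₀ α n) (α n))

variable {S₀ : Set V} {α : ℕ → V}

lemma responseRun_zero_of_mem (hv : v ∈ S₀) : responseRun G q r S₀ α 0 v = .A := by
  simp [responseRun, hv]

lemma responseRun_zero_of_notMem (hv : v ∉ S₀) : responseRun G q r S₀ α 0 v = .B := by
  simp [responseRun, hv]

lemma responseRun_succ_self (n : ℕ) :
    responseRun G q r S₀ α (n + 1) (α n) =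
      preferredResponse G q r (responseRun G q r S₀ α n) (α n) := by
  classical
  exact Function.update_self ..

lemma responseRun_succ_of_ne (n : ℕ) (v : V) (hv : v ≠ α n) :
    responseRun G q r S₀ α (n + 1) v = responseRun G q r S₀ α n v := by
  classical
  exact Function.update_of_ne hv ..

lemma epidemic_of_responseRun (hS₀ : S₀.Finite) (hα : ∀ v, ∃ᶠ n in atTop, α n = v)
    (hA : ∀ v, ∃ n, responseRun G q r S₀ α n v = .A) : Epidemic G q r :=
  ⟨S₀, α, responseRun G q r S₀ α, hS₀, fun v => (hα v).exists, fun _ => responseRun_zero_of_mem,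
    fun _ => responseRun_zero_of_notMem, fun n => responseRun_succ_self n ▸
      isBestResponse_preferredResponse, responseRun_succ_of_ne, hA⟩

end Dynamics

/-! ### The epidemic region -/

section ResponseRuns

variable {G : SimpleGraph V} {Δ : ℕ} {q r : ℝ} {σ : ℕ → V → Strat} {α : ℕ → V}
  (hself : ∀ n, σ (n + 1) (α n) = preferredResponse G q r (σ n) (α n))
  (hne : ∀ n v, v ≠ α n → σ (n + 1) v = σ n v) (hα : ∀ v, ∃ᶠ n in atTop, α n = v)
  {z z' : V} (hzz' : G.Adj z z')
include hself hne hα hzz'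

lemma exists_eq_A_of_regionI (hG : IsRegular G Δ) (hΔ : Δ ≠ 0) (hconn : G.Preconnected)
    (hq : 0 < q) (hr : 0 < r) (h₁ : q * Δ ≤ 1) (h₂ : q * (Δ - 1) ≤ r * Δ)
    (h₀ : ∀ v, σ 0 v ≠ .AB) (hz : σ 0 z = .A) (hz' : σ 0 z' = .A) (v : V) :
    ∃ n, σ n v = .A := by
  have hnoAB : ∀ n v, σ n v ≠ .AB := by
    refine forall_of_invariant hne (fun _ s => s ≠ .AB) h₀ fun n h => ?_
    rw [hself]
    refine preferredResponse_ne_AB fun hAB => ?_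
    have hc := degIn_preimage_eq_zero (G := G) (v := α n) fun u _ => h u
    by_cases ha : degIn G (α n) (σ n ⁻¹' {.A}) = 0
    · exact absurd hAB (not_isBestResponse_AB_of_forall_B hG hΔ hr ha hc)
    · exact isBestResponse_A_of_regionI hG hΔ hq h₁ h₂ ha hc
  refine (eventually_of_seed (P := (· = .A)) hne hα (fun n u hu h => ?_) hconn hzz' hz hz'
    v).exists
  rw [hself]
  exact preferredResponse_eq_A (isBestResponse_A_of_regionI hG hΔ hq h₁ h₂
    (degIn_preimage_ne_zero (hG.finite_neighborSet hΔ _) hu h)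
    (degIn_preimage_eq_zero fun w _ => hnoAB n w))

lemma exists_eq_A_of_regionII (hG : IsRegular G Δ) (hΔ : Δ ≠ 0) (hconn : G.Preconnected)
    (hq : 0 < q) (hr : 0 < r) (h : 2 * q + r * Δ ≤ 1) (hz : σ 0 z ≠ .B) (hz' : σ 0 z' ≠ .B)
    (v : V) : ∃ n, σ n v = .A := by
  have hfin := hG.finite_neighborSet hΔ
  have hnoB := eventually_of_seed (P := (· ≠ .B)) hne hα (fun n u hu hB => ?_) hconn hzz' hz hz'
  · obtain ⟨N, hN⟩ := eventually_atTop.1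
      ((eventually_all_finite (hfin v)).2 fun u _ => hnoB u)
    obtain ⟨n, hn, rfl⟩ := frequently_atTop.1 (hα v) N
    exact ⟨n + 1, (hself n).trans <| preferredResponse_eq_A <| isBestResponse_A_of_regionII hG hΔ
      hr h <| degIn_preimage_eq_zero fun u hu => hN n hn u hu⟩
  rw [hself]
  refine preferredResponse_ne_B (totalPayoff_B_le_AB_of_regionII hG hΔ hq hr h ?_)
  cases hs : σ n u
  · have := degIn_preimage_ne_zero (hfin _) hu hs
    omega
  · exact absurd hs hB
  · have := degIn_preimage_ne_zero (hfin _) hu hs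
    omega

end ResponseRuns

section Region

variable {G : SimpleGraph V} {Δ : ℕ} {q r : ℝ}

lemma epidemic_of_regionI (hG : IsRegular G Δ) (hΔ : Δ ≠ 0) (hconn : G.Connected)
    (hq : 0 < q) (hr : 0 < r) (h₁ : q * Δ ≤ 1) (h₂ : q * (Δ - 1) ≤ r * Δ) :
    Epidemic G q r := by
  obtain ⟨z, z', hzz', α, hα⟩ := hG.exists_adj_and_schedule hΔ hconn
  refine epidemic_of_responseRun (S₀ := {z, z'}) (Set.toFinite _) hα <|
    exists_eq_A_of_regionI responseRun_succ_self responseRun_succ_of_ne hα hzz' hG hΔ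
      hconn.preconnected hq hr h₁ h₂ (fun v => ?_) (responseRun_zero_of_mem (by simp))
      (responseRun_zero_of_mem (by simp))
  by_cases hv : v ∈ ({z, z'} : Set V)
  · simp [responseRun_zero_of_mem hv]
  · simp [responseRun_zero_of_notMem hv]

lemma epidemic_of_regionII (hG : IsRegular G Δ) (hΔ : Δ ≠ 0) (hconn : G.Connected)
    (hq : 0 < q) (hr : 0 < r) (h : 2 * q + r * Δ ≤ 1) : Epidemic G q r := by
  obtain ⟨z, z', hzz', α, hα⟩ := hG.exists_adj_and_schedule hΔ hconn
  have hseed : ∀ w ∈ ({z, z'} : Set V), responseRun G q r {z, z'} α 0 w ≠ .B :=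
    fun _ hw => by simp [responseRun_zero_of_mem hw]
  exact epidemic_of_responseRun (Set.toFinite _) hα <|
    exists_eq_A_of_regionII responseRun_succ_self responseRun_succ_of_ne hα hzz' hG hΔ
      hconn.preconnected hq hr h (hseed z (by simp)) (hseed z' (by simp))

lemma exists_forall_append_notMem {ι : Type*} {S : Set (List ι)} (hS : S.Finite) (a : ι) :
    ∃ t, ∀ m, m ++ a :: t ∉ S := by
  obtain ⟨L, hL⟩ := (hS.image List.length).bddAbove
  refine ⟨List.replicate L a, fun m hm => ?_⟩
  have := hL (Set.mem_image_of_mem _ hm)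
  simp only [List.length_append, List.length_cons, List.length_replicate] at this
  omega

lemma not_epidemic_of_branchPayoff (hG : IsRegular G Δ) (hcopy : HasRTCopy Δ G) (hΔ : 2 ≤ Δ)
    (R : Set Strat) (hBR : .B ∈ R) (hAR : .A ∉ R)
    (hroot : ∀ x s, (∀ s', branchPayoff Δ q r s' x ≤ branchPayoff Δ q r s x) → s ∈ R)
    (hdesc : ∀ x s, x ≠ .A → (∀ s', branchPayoff Δ q r s' x ≤ branchPayoff Δ q r s x) →
      s = .B) :
    ¬ Epidemic G q r := by
  classical
  obtain ⟨f, hf, hfG⟩ := hcopy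
  rintro ⟨S₀, α, σ, hS₀, -, -, h0B, hbr, hne, hA⟩
  let a₀ : Fin (Δ - 1) := ⟨0, by omega⟩
  obtain ⟨t, ht⟩ := exists_forall_append_notMem (hS₀.preimage hf.injOn) a₀
  -- The subtree below `a₀ :: t` avoids `S₀`; its root stays in `R` and the rest plays `B`.
  have hinv := forall_of_invariant hne
    (fun w s => ∀ m, w = f (m ++ a₀ :: t) → s ∈ if m = [] then R else {.B})
    (fun w m hw => by rw [h0B w (hw ▸ ht m)]; split_ifs <;> simp [hBR]) fun n hQ m hm => ?_
  · obtain ⟨k, hk⟩ := hA (f (a₀ :: a₀ :: t))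
    simpa [hk] using hinv k _ [a₀] rfl
  have hch : ∀ a, σ n (f (a :: (m ++ a₀ :: t))) = .B := fun a => by
    simpa using hQ _ (a :: m) rfl
  have hbest := hbr n
  rw [hm] at hbest ⊢
  cases m with
  | nil =>
    rw [List.nil_append] at hch hbest ⊢
    exact if_pos rfl ▸ hroot _ _ ((isBestResponse_copy_iff hG hf hfG hch).1 hbest)
  | cons c m' =>
    rw [List.cons_append] at hch hbest ⊢
    have hparent : σ n (f (m' ++ a₀ :: t)) ≠ .A := by
      have := hQ _ m' rfl
      split_ifs at this
      exacts [fun h => hAR (h ▸ this), fun h => by simp_all]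
    simpa using hdesc _ _ hparent ((isBestResponse_copy_iff hG hf hfG hch).1 hbest)

lemma not_epidemic_of_AB_blocks (hG : IsRegular G Δ) (hcopy : HasRTCopy Δ G) (hΔ : 2 ≤ Δ)
    (hq : 0 < q) (hr : 0 < r) (h₁ : 1 < 2 * q + r * Δ) (h₂ : r * Δ < q * (Δ - 1)) :
    ¬ Epidemic G q r :=
  not_epidemic_of_branchPayoff hG hcopy hΔ {.A}ᶜ (by simp) (by simp)
    (fun x _ hs hsA => (branchPayoff_A_lt_AB hq h₂ x).not_ge (hsA ▸ hs .AB))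
    fun _ _ hx hs => by_contra fun hsB =>
      (branchPayoff_lt_B_of_ne_A (by omega) hr h₁ (by linarith) hx hsB).not_ge (hs .B)

lemma not_epidemic_of_B_blocks (hG : IsRegular G Δ) (hcopy : HasRTCopy Δ G) (hΔ : 2 ≤ Δ)
    (hq : 0 < q) (hr : 0 < r) (h₁ : 1 < q * Δ) (h₂ : q * (Δ - 1) ≤ r * Δ) :
    ¬ Epidemic G q r := by
  have hblock x s (hs : ∀ s', branchPayoff Δ q r s' x ≤ branchPayoff Δ q r s x) : s = .B :=
    by_contra fun hsB => (branchPayoff_lt_B hq hr h₁ (by linarith) hsB x).not_ge (hs .B)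
  exact not_epidemic_of_branchPayoff hG hcopy hΔ {.B} rfl (by simp) hblock fun x s _ => hblock x s

lemma epidemic_iff (hG : IsRegular G Δ) (hΔ : 2 ≤ Δ) (hconn : G.Connected)
    (hcopy : HasRTCopy Δ G) (hq : 0 < q) (hr : 0 < r) :
    Epidemic G q r ↔ (q * Δ ≤ 1 ∧ q * (Δ - 1) ≤ r * Δ) ∨ 2 * q + r * Δ ≤ 1 := by
  refine ⟨fun he => ?_, ?_⟩
  · by_contra! h
    rcases lt_or_ge (r * Δ) (q * (Δ - 1)) with h₂ | h₂
    · exact not_epidemic_of_AB_blocks hG hcopy hΔ hq hr h.2 h₂ he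
    · exact not_epidemic_of_B_blocks hG hcopy hΔ hq hr
        (lt_of_not_ge fun h₁ => (h.1 h₁).not_ge h₂) h₂ he
  · rintro (⟨h₁, h₂⟩ | h)
    · exact epidemic_of_regionI hG (by omega) hconn hq hr h₁ h₂
    · exact epidemic_of_regionII hG (by omega) hconn hq hr h

lemma mem_treeRegion_iff (hΔ : 0 < Δ) :
    (q, r) ∈ treeRegion Δ ↔
      0 < q ∧ 0 < r ∧ ((q * Δ ≤ 1 ∧ q * (Δ - 1) ≤ r * Δ) ∨ 2 * q + r * Δ ≤ 1) := by
  have hΔ' : (0 : ℝ) < Δ := by exact_mod_cast hΔ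
  simp only [treeRegion, Set.mem_union, Set.mem_ofPred_eq, div_mul_eq_mul_div, div_le_iff₀ hΔ',
    le_div_iff₀ hΔ']
  constructor
  · rintro (⟨hq, hr, h₁, h₂⟩ | ⟨hq, hr, h⟩)
    · exact ⟨hq, hr, Or.inl ⟨by linarith, by linarith⟩⟩
    · exact ⟨hq, hr, Or.inr (by linarith)⟩
  · rintro ⟨hq, hr, ⟨h₁, h₂⟩ | h⟩
    · exact Or.inl ⟨hq, hr, by linarith, by linarith⟩
    · exact Or.inr ⟨hq, hr, by linarith⟩

lemma epidemicRegion_eq_treeRegion (hG : IsRegular G Δ) (hΔ : 2 ≤ Δ) (hconn : G.Connected)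
    (hcopy : HasRTCopy Δ G) : epidemicRegion G = treeRegion Δ := by
  have hΔ' : (2 : ℝ) ≤ Δ := by exact_mod_cast hΔ
  ext ⟨q, r⟩
  rw [mem_treeRegion_iff (by omega)]
  refine ⟨fun ⟨hq, _, hr, he⟩ => ⟨hq, hr, (epidemic_iff hG hΔ hconn hcopy hq hr).1 he⟩,
    fun ⟨hq, hr, h⟩ => ⟨hq, ?_, hr, (epidemic_iff hG hΔ hconn hcopy hq hr).2 h⟩⟩
  rcases h with ⟨h₁, -⟩ | h <;> nlinarith

end Region

theorem region_eq_tree_of_hasRTCopy_general {V W : Type*} (Δ : ℕ) (hΔ : 2 ≤ Δ)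
    (G : SimpleGraph V) (hGConn : G.Connected) (hGReg : IsRegular G Δ)
    (hcopy : HasRTCopy Δ G)
    (T : SimpleGraph W) (hTConn : T.Connected)
    (hTAcyc : T.IsAcyclic) (hTReg : IsRegular T Δ) :
    epidemicRegion G = epidemicRegion T := by
  have : Nonempty W := hTConn.nonempty
  rw [epidemicRegion_eq_treeRegion hGReg hΔ hGConn hcopy,
    epidemicRegion_eq_treeRegion hTReg hΔ hTConn (hasRTCopy_of_isAcyclic hTReg (by omega) hTAcyc)]

/-- If a connected infinite `Δ`-regular graph `G` contains a subgraph
isomorphic to `RT_Δ`, then its epidemic region equals that of the infinite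
`Δ`-regular tree `T_Δ`. -/
theorem region_eq_tree_of_hasRTCopy {V W : Type*} (Δ : ℕ) (hΔ : 2 ≤ Δ)
    (G : SimpleGraph V) (hGInf : Infinite V) (hGConn : G.Connected) (hGReg : IsRegular G Δ)
    (hcopy : HasRTCopy Δ G)
    (T : SimpleGraph W) (hTInf : Infinite W) (hTConn : T.Connected)
    (hTAcyc : T.IsAcyclic) (hTReg : IsRegular T Δ) :
    epidemicRegion G = epidemicRegion T :=
  region_eq_tree_of_hasRTCopy_general Δ hΔ G hGConn hGReg hcopy T hTConn hTAcyc hTReg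

end Contagion
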